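/- arXiv:math/0611279 — 7 statements merged into one kernel-verified Lean document; each statement's English description precedes it below -/
import Mathlib

section
/- Let f : [0,T) → ℝ be a maximal solution of the ODE f'' = Ξ(f', f) with f(0) = 1 and f'(0) = 1, where Ξ : ℝ × ℝ → ℝ satisfies Ξ(x,y) ≥ ε x^a y^b for all x ≥ 1, y ≥ 1, with constants ε > 0 and nonnegative integers a, b satisfying 2a + b ≥ 3. Then T < ∞. -/
/-!
Since `Ξ > 0` on `[1, ∞)²`, the quadrant `f ≥ 1, f' ≥ 1` is forward invariant, so
`f'' ≥ ε f'^a f^b` as long as the solution exists. If `a ≥ 2` this is the Riccati inequality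
`f'' ≥ ε f'²` for `f'`. If `a = 1` (so `b ≥ 1`), integrating `f'' ≥ ε f' f` gives `f' ≳ f²`;
if `a = 0` (so `b ≥ 3`), integrating `2 f' f'' ≥ 2 ε f³ f'` gives `f'² ≳ f⁴`. Either way some
positive function `g` satisfies `g' ≥ c g²` for all time, which is impossible: `-1/g` would grow
at least linearly while staying negative. Hence there is no global solution.
-/

/-- `f` solves the ODE `f'' = Ξ(f', f)` on the interval `[0, T)` (with `T : EReal`
possibly infinite), being twice differentiable there. -/
def SolvesODE (Ξ : ℝ → ℝ → ℝ) (f : ℝ → ℝ) (T : EReal) : Prop :=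
  ∀ t : ℝ, 0 ≤ t → (t : EReal) < T →
    DifferentiableAt ℝ f t ∧ DifferentiableAt ℝ (deriv f) t ∧
      deriv (deriv f) t = Ξ (deriv f t) (f t)

open Set Filter Topology

lemma HasDerivAt.eventually_lt_nhdsGT {f : ℝ → ℝ} {f' x : ℝ} (h : HasDerivAt f f' x)
    (hf' : 0 < f') : ∀ᶠ y in 𝓝[>] x, f x < f y := by
  filter_upwards [(hasDerivAt_iff_tendsto_slope_left_right.1 h).2.eventually (lt_mem_nhds hf'),
    self_mem_nhdsWithin] with y hslope hxy
  exact (slope_pos_iff_of_le hxy.le).1 hslope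

lemma sub_le_sub_of_hasDerivAt_le {F G F' G' : ℝ → ℝ} {a t : ℝ}
    (hF : ∀ s, a ≤ s → HasDerivAt F (F' s) s) (hG : ∀ s, a ≤ s → HasDerivAt G (G' s) s)
    (hle : ∀ s, a < s → G' s ≤ F' s) (ht : a ≤ t) :
    G t - G a ≤ F t - F a := by
  have hD : ∀ s, a ≤ s → HasDerivAt (fun s => F s - G s) (F' s - G' s) s :=
    fun s hs => (hF s hs).sub (hG s hs)
  have hmono : MonotoneOn (fun s => F s - G s) (Ici a) := by
    refine monotoneOn_of_hasDerivWithinAt_nonneg (f' := fun s => F' s - G' s) (convex_Ici a)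
      (fun s hs => (hD s hs).continuousAt.continuousWithinAt) (fun s hs => ?_) (fun s hs => ?_)
    · rw [interior_Ici] at hs
      exact (hD s hs.le).hasDerivWithinAt
    · rw [interior_Ici] at hs
      exact sub_nonneg.2 (hle s hs)
  have := hmono self_mem_Ici ht ht
  simp only at this
  linarith

lemma false_of_sq_le_deriv {g : ℝ → ℝ} {c t₀ : ℝ} (hc : 0 < c)
    (hd : ∀ t, t₀ ≤ t → DifferentiableAt ℝ g t) (hpos : ∀ t, t₀ ≤ t → 0 < g t)
    (hric : ∀ t, t₀ ≤ t → c * g t ^ 2 ≤ deriv g t) : False := by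
  set t := t₀ + (c * g t₀)⁻¹
  have ht : t₀ ≤ t := le_add_of_nonneg_right (inv_nonneg.2 (mul_pos hc (hpos t₀ le_rfl)).le)
  have h := sub_le_sub_of_hasDerivAt_le (F := fun t => -(g t)⁻¹) (G := fun t => c * t)
    (fun s hs => ((hd s hs).hasDerivAt.inv (hpos s hs).ne').neg)
    (fun s _ => (hasDerivAt_id s).const_mul c)
    (fun s hs => by
      have := hpos s hs.le
      rw [neg_div, neg_neg, le_div_iff₀ (by positivity)]
      simpa using hric s hs.le) ht
  have hgt := hpos t ht
  have hct : c * t - c * t₀ = (g t₀)⁻¹ := by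
    have := hpos t₀ le_rfl
    simp only [t]; field_simp; ring
  simp only [hct] at h
  have : 0 < (g t)⁻¹ := inv_pos.2 hgt
  linarith

lemma min_one_mul_le {k x : ℝ} (hx : 1 ≤ x) : min 1 k * x ≤ 1 + k * (x - 1) := by
  rcases le_total 1 k with h | h
  · rw [min_eq_left h]; nlinarith
  · rw [min_eq_right h]; nlinarith

lemma mul_pow_mul_pow_le {ε x y : ℝ} {m n a b : ℕ} (hε : 0 ≤ ε) (hx : 1 ≤ x) (hy : 1 ≤ y)
    (hm : m ≤ a) (hn : n ≤ b) : ε * x ^ m * y ^ n ≤ ε * x ^ a * y ^ b := by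
  rw [mul_assoc, mul_assoc]
  exact mul_le_mul_of_nonneg_left
    (mul_le_mul (pow_le_pow_right₀ hx hm) (pow_le_pow_right₀ hy hn) (by positivity)
      (by positivity)) hε

namespace SolvesODE

variable {Ξ : ℝ → ℝ → ℝ} {f : ℝ → ℝ} {t : ℝ}

lemma differentiableAt (h : SolvesODE Ξ f ⊤) (ht : 0 ≤ t) : DifferentiableAt ℝ f t :=
  (h t ht (EReal.coe_lt_top t)).1

lemma differentiableAt_deriv (h : SolvesODE Ξ f ⊤) (ht : 0 ≤ t) :
    DifferentiableAt ℝ (deriv f) t :=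
  (h t ht (EReal.coe_lt_top t)).2.1

lemma deriv_deriv (h : SolvesODE Ξ f ⊤) (ht : 0 ≤ t) : deriv (deriv f) t = Ξ (deriv f t) (f t) :=
  (h t ht (EReal.coe_lt_top t)).2.2

lemma one_le_and_one_le_deriv (h : SolvesODE Ξ f ⊤)
    (hΞ : ∀ x y, 1 ≤ x → 1 ≤ y → 0 < Ξ x y) (hf0 : 1 ≤ f 0) (hf'0 : 1 ≤ deriv f 0)
    (ht : 0 ≤ t) : 1 ≤ f t ∧ 1 ≤ deriv f t := by
  set s := {x | 1 ≤ f x ∧ 1 ≤ deriv f x}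
  have hclosed : IsClosed (s ∩ Icc 0 t) := by
    have hf : ContinuousOn f (Icc 0 t) :=
      fun x hx => (h.differentiableAt hx.1).continuousAt.continuousWithinAt
    have hf' : ContinuousOn (deriv f) (Icc 0 t) :=
      fun x hx => (h.differentiableAt_deriv hx.1).continuousAt.continuousWithinAt
    have : s ∩ Icc 0 t = (Icc 0 t ∩ f ⁻¹' Ici 1) ∩ (Icc 0 t ∩ deriv f ⁻¹' Ici 1) := by
      ext; simp only [s, mem_inter_iff, mem_ofPred_eq, mem_preimage, mem_Ici]; tauto
    rw [this]
    exact (hf.preimage_isClosed_of_isClosed isClosed_Icc isClosed_Ici).inter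
      (hf'.preimage_isClosed_of_isClosed isClosed_Icc isClosed_Ici)
  refine IsClosed.Icc_subset_of_forall_mem_nhdsWithin hclosed ⟨hf0, hf'0⟩ ?_ ⟨ht, le_rfl⟩
  rintro x ⟨⟨hfx, hf'x⟩, hx, -⟩
  have hf := (h.differentiableAt hx).hasDerivAt.eventually_lt_nhdsGT (by linarith)
  have hf' := (h.differentiableAt_deriv hx).hasDerivAt.eventually_lt_nhdsGT
    (h.deriv_deriv hx ▸ hΞ _ _ hf'x hfx)
  filter_upwards [hf, hf'] with y hy hy'
  exact ⟨by linarith, by linarith⟩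

variable {ε : ℝ}

lemma false_of_mul_le_deriv_deriv (h : SolvesODE Ξ f ⊤) (hε : 0 < ε) (hf0 : f 0 = 1)
    (hf'0 : deriv f 0 = 1) (hge : ∀ t, 0 ≤ t → 1 ≤ f t)
    (hineq : ∀ t, 0 ≤ t → ε * (deriv f t * f t) ≤ deriv (deriv f) t) : False := by
  have henergy : ∀ t, 0 ≤ t → ε / 2 * f t ^ 2 - ε / 2 * f 0 ^ 2 ≤ deriv f t - deriv f 0 :=
    fun t ht => sub_le_sub_of_hasDerivAt_le
      (fun s hs => (h.differentiableAt_deriv hs).hasDerivAt)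
      (fun s hs => ((h.differentiableAt hs).hasDerivAt.pow 2).const_mul (ε / 2))
      (fun s hs => by have := hineq s hs.le; norm_num; linarith) ht
  refine false_of_sq_le_deriv (lt_min one_pos (half_pos hε)) (fun t ht => h.differentiableAt ht)
    (fun t ht => one_pos.trans_le (hge t ht)) (fun t ht => ?_)
  have hf2 : 1 ≤ f t ^ 2 := one_le_pow₀ (hge t ht)
  have := henergy t ht
  rw [hf0, hf'0] at this
  nlinarith [min_one_mul_le (k := ε / 2) hf2]

lemma false_of_cube_le_deriv_deriv (h : SolvesODE Ξ f ⊤) (hε : 0 < ε) (hf0 : f 0 = 1)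
    (hf'0 : deriv f 0 = 1) (hge : ∀ t, 0 ≤ t → 1 ≤ f t ∧ 1 ≤ deriv f t)
    (hineq : ∀ t, 0 ≤ t → ε * f t ^ 3 ≤ deriv (deriv f) t) : False := by
  have henergy : ∀ t, 0 ≤ t →
      ε / 2 * f t ^ 4 - ε / 2 * f 0 ^ 4 ≤ deriv f t ^ 2 - deriv f 0 ^ 2 :=
    fun t ht => sub_le_sub_of_hasDerivAt_le
      (fun s hs => (h.differentiableAt_deriv hs).hasDerivAt.pow 2)
      (fun s hs => ((h.differentiableAt hs).hasDerivAt.pow 4).const_mul (ε / 2))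
      (fun s hs => by
        have := mul_le_mul_of_nonneg_left (hineq s hs.le)
          (by linarith [(hge s hs.le).2] : (0 : ℝ) ≤ 2 * deriv f s)
        norm_num; linarith) ht
  have hc : 0 < min 1 (ε / 2) := lt_min one_pos (half_pos hε)
  refine false_of_sq_le_deriv (Real.sqrt_pos.2 hc) (fun t ht => h.differentiableAt ht)
    (fun t ht => one_pos.trans_le (hge t ht).1) (fun t ht => ?_)
  have hf4 : 1 ≤ f t ^ 4 := one_le_pow₀ (hge t ht).1
  have := henergy t ht
  rw [hf0, hf'0] at this
  have hsq : (Real.sqrt (min 1 (ε / 2)) * f t ^ 2) ^ 2 ≤ deriv f t ^ 2 := by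
    rw [mul_pow, Real.sq_sqrt hc.le]
    nlinarith [min_one_mul_le (k := ε / 2) hf4]
  exact le_of_sq_le_sq hsq (by linarith [(hge t ht).2])

end SolvesODE

theorem stmt_0_general (Ξ : ℝ → ℝ → ℝ)
    (ε : ℝ) (hε : 0 < ε) (a b : ℕ) (hab : 3 ≤ 2 * a + b)
    (hlb : ∀ x y : ℝ, 1 ≤ x → 1 ≤ y → ε * x ^ a * y ^ b ≤ Ξ x y)
    (T : EReal) (f : ℝ → ℝ)
    (hf0 : f 0 = 1) (hf'0 : deriv f 0 = 1)
    (hsol : SolvesODE Ξ f T) :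
    T < ⊤ := by
  rw [lt_top_iff_ne_top]
  rintro rfl
  have hΞ : ∀ x y, 1 ≤ x → 1 ≤ y → 0 < Ξ x y := fun x y hx hy =>
    (by positivity : 0 < ε * x ^ a * y ^ b).trans_le (hlb x y hx hy)
  have hge : ∀ t, 0 ≤ t → 1 ≤ f t ∧ 1 ≤ deriv f t :=
    fun t ht => hsol.one_le_and_one_le_deriv hΞ hf0.ge hf'0.ge ht
  have hlow : ∀ m n, m ≤ a → n ≤ b → ∀ t, 0 ≤ t →
      ε * deriv f t ^ m * f t ^ n ≤ deriv (deriv f) t := fun m n hm hn t ht =>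
    (mul_pow_mul_pow_le hε.le (hge t ht).2 (hge t ht).1 hm hn).trans
      (hsol.deriv_deriv ht ▸ hlb _ _ (hge t ht).2 (hge t ht).1)
  rcases a with _ | _ | a
  · exact hsol.false_of_cube_le_deriv_deriv hε hf0 hf'0 hge
      (fun t ht => by simpa using hlow 0 3 le_rfl (by omega) t ht)
  · exact hsol.false_of_mul_le_deriv_deriv hε hf0 hf'0 (fun t ht => (hge t ht).1)
      (fun t ht => by simpa [mul_assoc] using hlow 1 1 le_rfl (by omega) t ht)
  · exact false_of_sq_le_deriv hε (fun t ht => hsol.differentiableAt_deriv ht)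
      (fun t ht => one_pos.trans_le (hge t ht).2)
      (fun t ht => by simpa using hlow 2 0 (by omega) b.zero_le t ht)

theorem stmt_0 (Ξ : ℝ → ℝ → ℝ) (hΞcont : Continuous fun p : ℝ × ℝ => Ξ p.1 p.2)
    (ε : ℝ) (hε : 0 < ε) (a b : ℕ) (hab : 3 ≤ 2 * a + b)
    (hlb : ∀ x y : ℝ, 1 ≤ x → 1 ≤ y → ε * x ^ a * y ^ b ≤ Ξ x y)
    (T : EReal) (hT : 0 < T) (f : ℝ → ℝ)
    (hf0 : f 0 = 1) (hf'0 : deriv f 0 = 1)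
    (hsol : SolvesODE Ξ f T)
    (hmax : ¬ ∃ (T' : EReal) (g : ℝ → ℝ), T < T' ∧
        (∀ t : ℝ, 0 ≤ t → (t : EReal) < T → g t = f t) ∧ SolvesODE Ξ g T') :
    T < ⊤ :=
  stmt_0_general Ξ ε hε a b hab hlb T f hf0 hf'0 hsol
end

section
/- Suppose f : [0,∞) → ℝ is twice differentiable with f(0) = 1, f'(0) = 1, and f''(t) ≥ ε f'(t)^a f(t)^b whenever f(t) ≥ 1 and f'(t) ≥ 1, where ε ∈ (0,1) and 2a + b ≥ 3 for nonnegative reals a, b. Define t₁ = 0 and t_{n+1} = t_n + 3/(ε n²). Then for all n ≥ 1 we have f(t_n) ≥ n and f'(t_n) ≥ n². -/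
open Set Filter Topology

private lemma eventually_gt_of_deriv_pos' {g : ℝ → ℝ} {x d : ℝ}
    (hg : HasDerivAt g d x) (hd : 0 < d) : ∀ᶠ z in 𝓝[>] x, g x < g z := by
  have h := hasDerivAt_iff_tendsto_slope.mp hg
  have h2 : Filter.Tendsto (slope g x) (𝓝[>] x) (𝓝 d) :=
    h.mono_left (nhdsWithin_mono _ (fun z hz => ne_of_gt hz))
  have h3 : ∀ᶠ z in 𝓝[>] x, 0 < slope g x z := h2.eventually (eventually_gt_nhds hd)
  filter_upwards [h3, self_mem_nhdsWithin] with z hz hz'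
  have hzx : (0:ℝ) < z - x := sub_pos.mpr hz'
  rw [slope_def_field] at hz
  rcases div_pos_iff.mp hz with ⟨h5, _⟩ | ⟨_, h6⟩
  · linarith
  · linarith

theorem stmt_2 (ε a b : ℝ) (hε0 : 0 < ε) (hε1 : ε < 1) (ha : 0 ≤ a) (hb : 0 ≤ b)
    (hab : 3 ≤ 2 * a + b) (f : ℝ → ℝ)
    (hdiff : ∀ t : ℝ, 0 ≤ t → DifferentiableAt ℝ f t ∧ DifferentiableAt ℝ (deriv f) t)
    (hf0 : f 0 = 1) (hf'0 : deriv f 0 = 1)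
    (hode : ∀ t : ℝ, 0 ≤ t → 1 ≤ f t → 1 ≤ deriv f t →
      ε * (deriv f t) ^ a * (f t) ^ b ≤ deriv (deriv f) t)
    (tseq : ℕ → ℝ) (ht1 : tseq 1 = 0)
    (htn : ∀ n : ℕ, 1 ≤ n → tseq (n + 1) = tseq n + 3 / (ε * (n : ℝ) ^ 2)) :
    ∀ n : ℕ, 1 ≤ n → (n : ℝ) ≤ f (tseq n) ∧ (n : ℝ) ^ 2 ≤ deriv f (tseq n) := by
  have hc : ∀ t : ℝ, 0 ≤ t → ContinuousAt f t := fun t ht => (hdiff t ht).1.continuousAt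
  have hc' : ∀ t : ℝ, 0 ≤ t → ContinuousAt (deriv f) t := fun t ht => (hdiff t ht).2.continuousAt
  -- invariance : f ≥ 1 and f' ≥ 1 on [0, ∞)
  have key : ∀ T : ℝ, 0 ≤ T → 1 ≤ f T ∧ 1 ≤ deriv f T := by
    intro T hT
    set s : Set ℝ := {t | 1 ≤ f t ∧ 1 ≤ deriv f t} with hs
    have hsub : Icc 0 T ⊆ s := by
      apply IsClosed.Icc_subset_of_forall_exists_gt
      · have e : s ∩ Icc 0 T = (Icc 0 T ∩ f ⁻¹' (Ici 1)) ∩ (Icc 0 T ∩ (deriv f) ⁻¹' (Ici 1)) := by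
          ext z
          simp only [hs, mem_inter_iff, mem_setOf_eq, mem_preimage, mem_Ici]
          tauto
        rw [e]
        have cf : ContinuousOn f (Icc 0 T) := fun z hz => (hc z hz.1).continuousWithinAt
        have cf' : ContinuousOn (deriv f) (Icc 0 T) := fun z hz => (hc' z hz.1).continuousWithinAt
        exact (cf.preimage_isClosed_of_isClosed isClosed_Icc isClosed_Ici).inter
          (cf'.preimage_isClosed_of_isClosed isClosed_Icc isClosed_Ici)
      · exact ⟨hf0.ge, hf'0.ge⟩
      · rintro x ⟨⟨hfx, hf'x⟩, hx0, hxT⟩ y hy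
        have h1 : HasDerivAt f (deriv f x) x := (hdiff x hx0).1.hasDerivAt
        have h2 : HasDerivAt (deriv f) (deriv (deriv f) x) x := (hdiff x hx0).2.hasDerivAt
        have hdd : 0 < deriv (deriv f) x := by
          have hO := hode x hx0 hfx hf'x
          have h3 : (1:ℝ) ≤ (deriv f x) ^ a := by
            calc (1:ℝ) = (1:ℝ) ^ a := (Real.one_rpow a).symm
            _ ≤ (deriv f x) ^ a := Real.rpow_le_rpow zero_le_one hf'x ha
          have h4 : (1:ℝ) ≤ (f x) ^ b := by
            calc (1:ℝ) = (1:ℝ) ^ b := (Real.one_rpow b).symm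
            _ ≤ (f x) ^ b := Real.rpow_le_rpow zero_le_one hfx hb
          have h5 : (1:ℝ)*1 ≤ (deriv f x)^a * (f x)^b :=
            mul_le_mul h3 h4 zero_le_one (le_trans zero_le_one h3)
          have h6 : ε * 1 ≤ ε * ((deriv f x)^a * (f x)^b) :=
            mul_le_mul_of_nonneg_left (by linarith) hε0.le
          rw [← mul_assoc] at h6
          linarith
        have e1 := eventually_gt_of_deriv_pos' h1 (by linarith : (0:ℝ) < deriv f x)
        have e2 := eventually_gt_of_deriv_pos' h2 hdd
        have e3 : Ioc x y ∈ 𝓝[>] x := Ioc_mem_nhdsGT_of_mem ⟨le_refl x, hy⟩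
        have he : ∀ᶠ z in 𝓝[>] x, z ∈ s ∩ Ioc x y := by
          filter_upwards [e1, e2, e3] with z hz1 hz2 hz3
          exact ⟨⟨le_trans hfx hz1.le, le_trans hf'x hz2.le⟩, hz3⟩
        exact he.exists
    exact hsub ⟨hT, le_refl T⟩
  -- monotonicity of f and f' on [0, ∞)
  have hdd_nonneg : ∀ x : ℝ, 0 ≤ x → 0 ≤ deriv (deriv f) x := by
    intro x hx
    obtain ⟨h1, h2⟩ := key x hx
    have hO := hode x hx h1 h2
    have : (0:ℝ) ≤ ε * (deriv f x) ^ a * (f x) ^ b :=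
      mul_nonneg (mul_nonneg hε0.le (Real.rpow_nonneg (by linarith) a))
        (Real.rpow_nonneg (by linarith) b)
    linarith
  have hmono' : MonotoneOn (deriv f) (Ici 0) := by
    apply monotoneOn_of_deriv_nonneg (convex_Ici 0)
      (fun z hz => (hc' z hz).continuousWithinAt)
    · intro z hz
      rw [interior_Ici] at hz
      exact ((hdiff z hz.le).2).differentiableWithinAt
    · intro z hz
      rw [interior_Ici] at hz
      exact hdd_nonneg z hz.le
  have hmono : MonotoneOn f (Ici 0) := by
    apply monotoneOn_of_deriv_nonneg (convex_Ici 0)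
      (fun z hz => (hc z hz).continuousWithinAt)
    · intro z hz
      rw [interior_Ici] at hz
      exact ((hdiff z hz.le).1).differentiableWithinAt
    · intro z hz
      rw [interior_Ici] at hz
      linarith [(key z hz.le).2]
  -- nonnegativity of tseq
  have htpos : ∀ n : ℕ, 1 ≤ n → 0 ≤ tseq n := by
    intro n
    induction n with
    | zero => intro h; exact absurd h (by norm_num)
    | succ m ih =>
      intro _
      rcases Nat.eq_zero_or_pos m with hm | hm
      · subst hm; rw [ht1]
      · rw [htn m hm]
        have hm1 : (1:ℝ) ≤ (m:ℝ) := by exact_mod_cast hm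
        have : (0:ℝ) < 3 / (ε * (m:ℝ) ^ 2) := by positivity
        linarith [ih hm]
  intro n
  induction n with
  | zero => intro h; exact absurd h (by norm_num)
  | succ m ih =>
    intro _
    rcases Nat.eq_zero_or_pos m with hm | hm
    · subst hm
      norm_num [ht1, hf0, hf'0]
    · obtain ⟨hA, hB⟩ := ih hm
      have hm1 : (1:ℝ) ≤ (m:ℝ) := by exact_mod_cast hm
      have ht0 : 0 ≤ tseq m := htpos m hm
      set t := tseq m with htdef
      set Δ : ℝ := 3 / (ε * (m:ℝ) ^ 2) with hΔdef
      have hΔpos : 0 < Δ := by positivity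
      have hstep : tseq (m + 1) = t + Δ := htn m hm
      have hD : Convex ℝ (Icc t (t + Δ)) := convex_Icc _ _
      have hDpos : ∀ x ∈ Icc t (t + Δ), (0:ℝ) ≤ x := fun x hx => le_trans ht0 hx.1
      have hint : interior (Icc t (t + Δ)) = Ioo t (t + Δ) := interior_Icc
      have hbound : ∀ x ∈ Ioo t (t + Δ), (m:ℝ) ≤ f x ∧ (m:ℝ)^2 ≤ deriv f x := by
        intro x hx
        have hx0 : (0:ℝ) ≤ x := le_trans ht0 hx.1.le
        constructor
        · exact le_trans hA (hmono ht0 hx0 hx.1.le)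
        · exact le_trans hB (hmono' ht0 hx0 hx.1.le)
      -- f step
      have hfstep : (m:ℝ)^2 * ((t + Δ) - t) ≤ f (t + Δ) - f t := by
        apply hD.mul_sub_le_image_sub_of_le_deriv
          (fun z hz => (hc z (hDpos z hz)).continuousWithinAt)
          (fun z hz => ((hdiff z (by rw [hint] at hz; exact le_trans ht0 hz.1.le)).1).differentiableWithinAt)
          (fun z hz => (hbound z (by rwa [hint] at hz)).2)
          t (left_mem_Icc.mpr (by linarith)) (t + Δ) (right_mem_Icc.mpr (by linarith)) (by linarith)
      -- f' step
      have hf'step : (ε * (m:ℝ)^3) * ((t + Δ) - t) ≤ deriv f (t + Δ) - deriv f t := by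
        apply hD.mul_sub_le_image_sub_of_le_deriv
          (fun z hz => (hc' z (hDpos z hz)).continuousWithinAt)
          (fun z hz => ((hdiff z (by rw [hint] at hz; exact le_trans ht0 hz.1.le)).2).differentiableWithinAt)
          ?_ t (left_mem_Icc.mpr (by linarith)) (t + Δ) (right_mem_Icc.mpr (by linarith)) (by linarith)
        intro z hz
        rw [hint] at hz
        have hz0 : (0:ℝ) ≤ z := le_trans ht0 hz.1.le
        obtain ⟨hfz, hf'z⟩ := hbound z hz
        have h1f : (1:ℝ) ≤ f z := le_trans hm1 hfz
        have h1f' : (1:ℝ) ≤ deriv f z := le_trans (by nlinarith) hf'z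
        have hO := hode z hz0 h1f h1f'
        have hm0 : (0:ℝ) < (m:ℝ) := by linarith
        have hpa : ((m:ℝ)^2) ^ a ≤ (deriv f z) ^ a :=
          Real.rpow_le_rpow (by positivity) hf'z ha
        have hpb : ((m:ℝ)) ^ b ≤ (f z) ^ b :=
          Real.rpow_le_rpow hm0.le hfz hb
        have hprod : ((m:ℝ)^2) ^ a * ((m:ℝ)) ^ b ≤ (deriv f z) ^ a * (f z) ^ b :=
          mul_le_mul hpa hpb (Real.rpow_nonneg hm0.le b) (Real.rpow_nonneg (by linarith) a)
        have heq : ((m:ℝ)^2) ^ a * ((m:ℝ)) ^ b = (m:ℝ) ^ (2 * a + b) := by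
          rw [show ((m:ℝ)^2 : ℝ) = (m:ℝ) ^ ((2:ℕ):ℝ) from (Real.rpow_natCast _ 2).symm,
            ← Real.rpow_mul hm0.le, ← Real.rpow_add hm0]
          norm_num
        have hexp : (m:ℝ) ^ ((3:ℕ):ℝ) ≤ (m:ℝ) ^ (2 * a + b) := by
          apply Real.rpow_le_rpow_of_exponent_le hm1
          push_cast; linarith
        rw [Real.rpow_natCast] at hexp
        have h3 : (m:ℝ)^3 ≤ (deriv f z) ^ a * (f z) ^ b := by
          calc (m:ℝ)^3 ≤ (m:ℝ) ^ (2*a+b) := hexp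
          _ = ((m:ℝ)^2) ^ a * ((m:ℝ)) ^ b := heq.symm
          _ ≤ _ := hprod
        calc ε * (m:ℝ)^3 ≤ ε * ((deriv f z) ^ a * (f z) ^ b) :=
              mul_le_mul_of_nonneg_left h3 hε0.le
        _ = ε * (deriv f z) ^ a * (f z) ^ b := by ring
        _ ≤ deriv (deriv f) z := hO
      -- finish
      have hm2 : (0:ℝ) < (m:ℝ)^2 := by positivity
      have hc1 : (m:ℝ)^2 * ((t + Δ) - t) = 3 / ε := by
        rw [hΔdef]; field_simp; ring
      have hc2 : (ε * (m:ℝ)^3) * ((t + Δ) - t) = 3 * (m:ℝ) := by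
        rw [hΔdef]; field_simp; ring
      rw [hc1] at hfstep
      rw [hc2] at hf'step
      have h3e : (3:ℝ) ≤ 3 / ε := by
        rw [le_div_iff₀ hε0]; nlinarith
      rw [hstep]
      push_cast
      constructor
      · linarith
      · nlinarith
end

section
/- There is no twice differentiable function f : [0,∞) → ℝ with f(0) = 1, f'(0) = 1 satisfying f''(t) = f'(t) f(t)² for all t ≥ 0; i.e., any solution of f'' = f' f² with these initial conditions blows up in finite time. -/
/-!
Along a solution, `f' - f³/3` is constant, so `f' = (f³ + 2)/3`; this keeps `f ≥ 1` and gives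
`f' ≥ f³/3`. Then `(f⁻²)' = -2 f'/f³ ≤ -2/3`, so the positive quantity `f⁻²`, which starts at `1`,
would become negative by time `3/2`.
-/

open Set

theorem sub_pow_three_div_three_eq_of_hasDerivAt {f g : ℝ → ℝ} {a : ℝ}
    (hf : ∀ t ≥ a, HasDerivAt f (g t) t) (hg : ∀ t ≥ a, HasDerivAt g (g t * f t ^ 2) t) :
    ∀ t ≥ a, g t - f t ^ 3 / 3 = g a - f a ^ 3 / 3 := by
  have hH : ∀ t ≥ a, HasDerivAt (fun x => g x - f x ^ 3 / 3) 0 t := fun t ht =>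
    ((hg t ht).sub (((hf t ht).pow 3).div_const 3)).congr_deriv (by push_cast; ring)
  intro t ht
  exact constant_of_has_deriv_right_zero (fun x hx => (hH x hx.1).continuousAt.continuousWithinAt)
    (fun x hx => (hH x hx.1).hasDerivWithinAt) t ⟨ht, le_rfl⟩

theorem le_of_hasDerivAt_of_eq_imp_deriv_pos {F F' : ℝ → ℝ} {a c : ℝ} (ha : c ≤ F a)
    (hF : ∀ t ≥ a, HasDerivAt F (F' t) t) (hc : ∀ t ≥ a, F t = c → 0 < F' t) :
    ∀ t ≥ a, c ≤ F t := fun _ ht =>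
  image_le_of_deriv_right_lt_deriv_boundary' (f' := 0) continuousOn_const
    (fun _ _ => hasDerivWithinAt_const _ _ c) ha
    (fun x hx => (hF x hx.1).continuousAt.continuousWithinAt)
    (fun x hx => (hF x hx.1).hasDerivWithinAt) (fun x hx hx' => hc x hx.1 hx'.symm)
    ⟨ht, le_rfl⟩

theorem two_mul_mul_sub_lt_inv_sq_of_mul_pow_three_le_deriv {f f' : ℝ → ℝ} {a b k : ℝ}
    (hab : a ≤ b) (hpos : ∀ x ∈ Icc a b, 0 < f x) (hf : ∀ x ∈ Icc a b, HasDerivAt f (f' x) x)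
    (hle : ∀ x ∈ Icc a b, k * f x ^ 3 ≤ f' x) :
    2 * k * (b - a) < (f a ^ 2)⁻¹ := by
  have hw : ∀ x ∈ Icc a b, HasDerivAt (fun y => (f y ^ 2)⁻¹) (-2 * f' x / f x ^ 3) x :=
    fun x hx => (((hf x hx).pow 2).inv (pow_pos (hpos x hx) 2).ne').congr_deriv <| by
      simp only [Pi.pow_apply]
      field_simp [(hpos x hx).ne']
      ring
  have hw_le : ∀ x ∈ interior (Icc a b), deriv (fun y => (f y ^ 2)⁻¹) x ≤ -(2 * k) := by
    intro x hx
    have hx' := interior_subset hx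
    rw [(hw x hx').deriv, neg_mul, neg_div, neg_le_neg_iff, le_div_iff₀ (pow_pos (hpos x hx') 3)]
    linarith [hle x hx']
  have hdrop := (convex_Icc a b).image_sub_le_mul_sub_of_deriv_le
    (fun x hx => (hw x hx).continuousAt.continuousWithinAt)
    (fun x hx => (hw x (interior_subset hx)).differentiableAt.differentiableWithinAt)
    hw_le a (left_mem_Icc.2 hab) b (right_mem_Icc.2 hab) hab
  have hwb : 0 < (f b ^ 2)⁻¹ := by have := hpos b (right_mem_Icc.2 hab); positivity
  linarith

theorem stmt_3 :
    ¬ ∃ f : ℝ → ℝ,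
      (∀ t : ℝ, 0 ≤ t → DifferentiableAt ℝ f t ∧ DifferentiableAt ℝ (deriv f) t) ∧
      f 0 = 1 ∧ deriv f 0 = 1 ∧
      ∀ t : ℝ, 0 ≤ t → deriv (deriv f) t = deriv f t * (f t) ^ 2 := by
  rintro ⟨f, hd, hf0, hg0, hode⟩
  have hf : ∀ t ≥ 0, HasDerivAt f (deriv f t) t := fun t ht => (hd t ht).1.hasDerivAt
  have hg : ∀ t ≥ 0, HasDerivAt (deriv f) (deriv f t * f t ^ 2) t := fun t ht =>
    hode t ht ▸ (hd t ht).2.hasDerivAt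
  have hfirst : ∀ t ≥ 0, deriv f t = (f t ^ 3 + 2) / 3 := fun t ht => by
    have := sub_pow_three_div_three_eq_of_hasDerivAt hf hg t ht
    rw [hf0, hg0] at this
    linarith
  have hone : ∀ t ≥ 0, 1 ≤ f t := le_of_hasDerivAt_of_eq_imp_deriv_pos hf0.ge hf
    fun t ht h => by rw [hfirst t ht, h]; norm_num
  have hblow := two_mul_mul_sub_lt_inv_sq_of_mul_pow_three_le_deriv (f := f) (a := 0) (b := 2)
    (k := 1 / 3) zero_le_two (fun x hx => one_pos.trans_le (hone x hx.1)) (fun x hx => hf x hx.1)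
    fun x hx => by rw [hfirst x hx.1]; linarith
  rw [hf0] at hblow
  norm_num at hblow
end

section
/- There is no twice differentiable function h : [0,∞) → ℝ with h(0) = 1, h'(0) = 1 satisfying h''(t) = h'(t)² h(t) for all t ≥ 0; i.e., any solution of h'' = (h')² h with these initial conditions blows up in finite time. -/
/-!
On any interval `[0, T)` where `h` and `h'` are positive, `h'' = h'² h ≥ 0`, so `h'` and then `h`
are nondecreasing there; by continuity (a real-induction argument) `h ≥ h 0` and `h' ≥ h' 0` on
all of `[0, ∞)`. Then `(1 / h')' = -h''/h'² = -h ≤ -h 0`, so `1 / h'` would reach `0` no later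
than `t = 1 / (h 0 · h' 0)`, which is impossible.
-/

open Set

theorem ContinuousOn.forall_pos_of_forall_Ico_pos {u : ℝ → ℝ} {a : ℝ}
    (hu : ContinuousOn u (Ici a))
    (step : ∀ T, a ≤ T → (∀ s ∈ Ico a T, 0 < u s) → 0 < u T) :
    ∀ t, a ≤ t → 0 < u t := by
  by_contra! hneg
  set Z := Ici a ∩ u ⁻¹' Iic 0
  have hZ : IsClosed Z := hu.preimage_isClosed_of_isClosed isClosed_Ici isClosed_Iic
  have hZne : Z.Nonempty := hneg
  have hZbdd : BddBelow Z := ⟨a, fun _ hz => hz.1⟩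
  -- the first time `u` fails to be positive
  have hmem : sInf Z ∈ Z := hZ.csInf_mem hZne hZbdd
  have hbefore : ∀ s ∈ Ico a (sInf Z), 0 < u s := fun s hs =>
    lt_of_not_ge fun hle => (csInf_le hZbdd ⟨hs.1, hle⟩).not_gt hs.2
  exact (step _ hmem.1 hbefore).not_ge hmem.2

theorem le_of_forall_differentiableAt_of_deriv_nonneg {f : ℝ → ℝ} {a b : ℝ} (hab : a ≤ b)
    (hf : ∀ x ∈ Icc a b, DifferentiableAt ℝ f x) (hf' : ∀ x ∈ Ioo a b, 0 ≤ deriv f x) :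
    f a ≤ f b := by
  refine monotoneOn_of_deriv_nonneg (convex_Icc a b)
    (fun x hx => (hf x hx).continuousAt.continuousWithinAt) ?_ ?_
    (left_mem_Icc.2 hab) (right_mem_Icc.2 hab) hab
  · rw [interior_Icc]
    exact fun x hx => (hf x (Ioo_subset_Icc_self hx)).differentiableWithinAt
  · rwa [interior_Icc]

section Blowup

variable {h : ℝ → ℝ}
  (hdiff : ∀ t, 0 ≤ t → DifferentiableAt ℝ h t ∧ DifferentiableAt ℝ (deriv h) t)
  (hode : ∀ t, 0 ≤ t → deriv (deriv h) t = deriv h t ^ 2 * h t)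
include hdiff hode

theorem initial_le_of_forall_Ico_pos {T : ℝ} (hT : 0 ≤ T)
    (hpos : ∀ s ∈ Ico 0 T, 0 < h s ∧ 0 < deriv h s) :
    h 0 ≤ h T ∧ deriv h 0 ≤ deriv h T := by
  constructor
  · exact le_of_forall_differentiableAt_of_deriv_nonneg hT (fun x hx => (hdiff x hx.1).1)
      fun x hx => (hpos x (Ioo_subset_Ico_self hx)).2.le
  · refine le_of_forall_differentiableAt_of_deriv_nonneg hT (fun x hx => (hdiff x hx.1).2)
      fun x hx => ?_
    rw [hode x hx.1.le]
    have := (hpos x (Ioo_subset_Ico_self hx)).1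
    positivity

theorem initial_le_of_initial_pos (h0 : 0 < h 0) (h'0 : 0 < deriv h 0) :
    ∀ t, 0 ≤ t → h 0 ≤ h t ∧ deriv h 0 ≤ deriv h t := by
  have hpos : ∀ t, 0 ≤ t → 0 < min (h t) (deriv h t) := by
    refine ContinuousOn.forall_pos_of_forall_Ico_pos
      (fun t ht => ContinuousAt.continuousWithinAt
        ((hdiff t ht).1.continuousAt.min (hdiff t ht).2.continuousAt))
      fun T hT hbefore => ?_
    obtain ⟨hle, hle'⟩ := initial_le_of_forall_Ico_pos hdiff hode hT
      fun s hs => lt_min_iff.1 (hbefore s hs)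
    exact lt_min (h0.trans_le hle) (h'0.trans_le hle')
  exact fun t ht => initial_le_of_forall_Ico_pos hdiff hode ht
    fun s hs => lt_min_iff.1 (hpos s hs.1)

theorem inv_deriv_le (h0 : 0 < h 0) (h'0 : 0 < deriv h 0) {t : ℝ} (ht : 0 ≤ t) :
    (deriv h t)⁻¹ ≤ (deriv h 0)⁻¹ - h 0 * t := by
  have hge := initial_le_of_initial_pos hdiff hode h0 h'0
  have hne : ∀ s, 0 ≤ s → deriv h s ≠ 0 := fun s hs => (h'0.trans_le (hge s hs).2).ne'
  have hderiv : ∀ s, 0 ≤ s →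
      HasDerivAt (fun x => (deriv h x)⁻¹) (-(deriv (deriv h) s) / deriv h s ^ 2) s :=
    fun s hs => (hdiff s hs).2.hasDerivAt.inv (hne s hs)
  have hslope :
      ∀ s ∈ interior (Ici (0 : ℝ)), deriv (fun x => (deriv h x)⁻¹) s ≤ -h 0 := by
    rw [interior_Ici]
    intro s hs
    have hs : (0 : ℝ) ≤ s := hs.le
    rw [(hderiv s hs).deriv, hode s hs, neg_div,
      mul_div_cancel_left₀ _ (pow_ne_zero 2 (hne s hs))]
    exact neg_le_neg (hge s hs).1
  have := (convex_Ici 0).image_sub_le_mul_sub_of_deriv_le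
    (fun s hs => (hderiv s hs).continuousAt.continuousWithinAt)
    (by
      rw [interior_Ici]
      exact fun s hs => (hderiv s hs.le).differentiableAt.differentiableWithinAt)
    hslope 0 self_mem_Ici t ht ht
  linarith

theorem false_of_initial_pos (h0 : 0 < h 0) (h'0 : 0 < deriv h 0) : False := by
  set T := (deriv h 0)⁻¹ / h 0
  have hT : 0 ≤ T := by positivity
  have hinv := inv_deriv_le hdiff hode h0 h'0 hT
  have hpos : 0 < (deriv h T)⁻¹ :=
    inv_pos.2 (h'0.trans_le (initial_le_of_initial_pos hdiff hode h0 h'0 T hT).2)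
  have hT_mul : h 0 * T = (deriv h 0)⁻¹ := mul_div_cancel₀ _ h0.ne'
  linarith

end Blowup

theorem stmt_4 :
    ¬ ∃ h : ℝ → ℝ,
      (∀ t : ℝ, 0 ≤ t → DifferentiableAt ℝ h t ∧ DifferentiableAt ℝ (deriv h) t) ∧
      h 0 = 1 ∧ deriv h 0 = 1 ∧
      ∀ t : ℝ, 0 ≤ t → deriv (deriv h) t = (deriv h t) ^ 2 * h t := by
  rintro ⟨h, hdiff, h0, h'0, hode⟩
  exact false_of_initial_pos hdiff hode (h0 ▸ one_pos) (h'0 ▸ one_pos)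
end

section
/- Consider ℝ⁴ with coordinates (x₁,x₂,x₃,x₄) and the pseudo-Riemannian metric g of signature (2,2) given by g(∂₁,∂₃) = g(∂₂,∂₄) = 1 and g(∂ᵢ,∂ⱼ) = ψᵢⱼ(x₃,x₄) for i,j ∈ {3,4}, where the ψᵢⱼ = ψⱼᵢ are smooth functions of (x₃,x₄) only. Then every geodesic has x₃ and x₄ affine in t: the geodesic equations force ẍ₃ = 0 and ẍ₄ = 0. -/
open Matrix

/-- Partial derivative in the `i`-th coordinate direction of a function on `ℝ⁴`. -/
noncomputable def pd (i : Fin 4) (F : (Fin 4 → ℝ) → ℝ) (x : Fin 4 → ℝ) : ℝ :=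
  fderiv ℝ F x (Pi.single i 1)

/-- The Walker metric of signature (2,2) on `ℝ⁴` with `g(∂₁,∂₃) = g(∂₂,∂₄) = 1`,
`g(∂₃,∂₃) = ψ₃₃`, `g(∂₃,∂₄) = ψ₃₄`, `g(∂₄,∂₄) = ψ₄₄` (coordinates are indexed `0,1,2,3`). -/
def walkerMetric (ψ33 ψ34 ψ44 : (Fin 4 → ℝ) → ℝ) (x : Fin 4 → ℝ) :
    Matrix (Fin 4) (Fin 4) ℝ :=
  Matrix.of
    ![![0, 0, 1, 0],
      ![0, 0, 0, 1],
      ![1, 0, ψ33 x, ψ34 x],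
      ![0, 1, ψ34 x, ψ44 x]]

/-- The Christoffel symbols `Γ^k_{ij}` of the Levi-Civita connection of the Walker metric. -/
noncomputable def christoffel (ψ33 ψ34 ψ44 : (Fin 4 → ℝ) → ℝ) (k i j : Fin 4)
    (x : Fin 4 → ℝ) : ℝ :=
  (1 / 2) * ∑ l : Fin 4, (walkerMetric ψ33 ψ34 ψ44 x)⁻¹ k l *
    (pd i (fun y => walkerMetric ψ33 ψ34 ψ44 y l j) x +
     pd j (fun y => walkerMetric ψ33 ψ34 ψ44 y l i) x -
     pd l (fun y => walkerMetric ψ33 ψ34 ψ44 y i j) x)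

def walkerInv (ψ33 ψ34 ψ44 : (Fin 4 → ℝ) → ℝ) (x : Fin 4 → ℝ) :
    Matrix (Fin 4) (Fin 4) ℝ :=
  Matrix.of
    ![![-ψ33 x, -ψ34 x, 1, 0],
      ![-ψ34 x, -ψ44 x, 0, 1],
      ![1, 0, 0, 0],
      ![0, 1, 0, 0]]

lemma walker_inv_eq (ψ33 ψ34 ψ44 : (Fin 4 → ℝ) → ℝ) (x : Fin 4 → ℝ) :
    (walkerMetric ψ33 ψ34 ψ44 x)⁻¹ = walkerInv ψ33 ψ34 ψ44 x := by
  apply Matrix.inv_eq_right_inv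
  ext i j
  fin_cases i <;> fin_cases j <;>
    simp [walkerMetric, walkerInv, Matrix.mul_apply, Fin.sum_univ_four, Matrix.one_apply,
      Matrix.vecHead, Matrix.vecTail] <;> ring

lemma pd_const (i : Fin 4) (c : ℝ) (x : Fin 4 → ℝ) : pd i (fun _ => c) x = 0 := by
  simp [pd]

lemma pd01 (ψ : (Fin 4 → ℝ) → ℝ) (hψ : ContDiff ℝ (⊤ : ℕ∞) ψ)
    (h : ∀ x y : Fin 4 → ℝ, x 2 = y 2 → x 3 = y 3 → ψ x = ψ y)
    (i : Fin 4) (hi : i = 0 ∨ i = 1) (x : Fin 4 → ℝ) : pd i ψ x = 0 := by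
  set v : Fin 4 → ℝ := Pi.single i 1 with hv
  have h2 : v 2 = 0 := by rcases hi with rfl | rfl <;> simp [hv, Pi.single_apply]
  have h3 : v 3 = 0 := by rcases hi with rfl | rfl <;> simp [hv, Pi.single_apply]
  have hline : (fun t : ℝ => ψ (x + t • v)) = fun _ => ψ x := by
    funext t
    apply h <;> simp [h2, h3]
  have h1 : HasDerivAt (fun t : ℝ => x + t • v) v 0 := by
    simpa using ((hasDerivAt_id (0:ℝ)).smul_const v).const_add x
  have hF := (hψ.differentiable (by simp) x).hasFDerivAt
  have hd : HasDerivAt (fun t : ℝ => ψ (x + t • v)) (fderiv ℝ ψ x v) 0 := by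
    have hF' : HasFDerivAt ψ (fderiv ℝ ψ x) (x + (0:ℝ) • v) := by simpa using hF
    exact hF'.comp_hasDerivAt 0 h1
  rw [hline] at hd
  have h0 := hd.unique (hasDerivAt_const 0 (ψ x))
  simpa [pd, hv] using h0


lemma christoffel_top (ψ33 ψ34 ψ44 : (Fin 4 → ℝ) → ℝ)
    (h33 : ContDiff ℝ (⊤ : ℕ∞) ψ33) (h34 : ContDiff ℝ (⊤ : ℕ∞) ψ34) (h44 : ContDiff ℝ (⊤ : ℕ∞) ψ44)
    (s33 : ∀ x y : Fin 4 → ℝ, x 2 = y 2 → x 3 = y 3 → ψ33 x = ψ33 y)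
    (s34 : ∀ x y : Fin 4 → ℝ, x 2 = y 2 → x 3 = y 3 → ψ34 x = ψ34 y)
    (s44 : ∀ x y : Fin 4 → ℝ, x 2 = y 2 → x 3 = y 3 → ψ44 x = ψ44 y)
    (k : Fin 4) (hk : k = 2 ∨ k = 3) (i j : Fin 4) (x : Fin 4 → ℝ) :
    christoffel ψ33 ψ34 ψ44 k i j x = 0 := by
  have p33_0 := pd01 ψ33 h33 s33 0 (Or.inl rfl) x
  have p33_1 := pd01 ψ33 h33 s33 1 (Or.inr rfl) x
  have p34_0 := pd01 ψ34 h34 s34 0 (Or.inl rfl) x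
  have p34_1 := pd01 ψ34 h34 s34 1 (Or.inr rfl) x
  have p44_0 := pd01 ψ44 h44 s44 0 (Or.inl rfl) x
  have p44_1 := pd01 ψ44 h44 s44 1 (Or.inr rfl) x
  rcases hk with rfl | rfl <;>
  · rw [christoffel, walker_inv_eq]
    fin_cases i <;> fin_cases j <;>
      simp [Fin.sum_univ_four, walkerInv, walkerMetric, pd_const,
        p33_0, p33_1, p34_0, p34_1, p44_0, p44_1]

/-- For a strict Walker manifold of signature (2,2) (the `ψᵢⱼ` depend only on the
coordinates `x₃, x₄`, i.e. indices `2, 3`), the geodesic equations force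
`ẍ₃ = 0` and `ẍ₄ = 0`, so `x₃` and `x₄` are affine in `t`. -/
theorem stmt_6 (ψ33 ψ34 ψ44 : (Fin 4 → ℝ) → ℝ)
    (hsmooth : ContDiff ℝ (⊤ : ℕ∞) ψ33 ∧ ContDiff ℝ (⊤ : ℕ∞) ψ34 ∧ ContDiff ℝ (⊤ : ℕ∞) ψ44)
    (hstrict : ∀ ψ ∈ [ψ33, ψ34, ψ44], ∀ x y : Fin 4 → ℝ,
      x 2 = y 2 → x 3 = y 3 → ψ x = ψ y)
    (γ : ℝ → Fin 4 → ℝ)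
    (hγ : ∀ (k : Fin 4) (t : ℝ), DifferentiableAt ℝ (fun s => γ s k) t ∧
      DifferentiableAt ℝ (deriv fun s => γ s k) t)
    (hgeo : ∀ (k : Fin 4) (t : ℝ),
      deriv (deriv fun s => γ s k) t +
        ∑ i : Fin 4, ∑ j : Fin 4,
          christoffel ψ33 ψ34 ψ44 k i j (γ t) *
            deriv (fun s => γ s i) t * deriv (fun s => γ s j) t = 0) :
    ∀ t : ℝ, deriv (deriv fun s => γ s 2) t = 0 ∧ deriv (deriv fun s => γ s 3) t = 0 := by
  intro t
  have hC := christoffel_top ψ33 ψ34 ψ44 hsmooth.1 hsmooth.2.1 hsmooth.2.2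
    (hstrict ψ33 (by simp)) (hstrict ψ34 (by simp)) (hstrict ψ44 (by simp))
  constructor
  · simpa [hC 2 (Or.inl rfl)] using hgeo 2 t
  · simpa [hC 3 (Or.inr rfl)] using hgeo 3 t
end

section
/- Consider ℝ⁴ with the Walker metric g of signature (2,2) determined by g(∂₁,∂₃) = g(∂₂,∂₄) = 1 and g(∂ᵢ,∂ⱼ) = ψᵢⱼ(x₃,x₄) for i,j ∈ {3,4}, ψᵢⱼ smooth in (x₃,x₄) only. Then for every tangent vector x, the Jacobi operator J(x) : y ↦ R(y,x)x is nilpotent; in fact J(x) maps span{∂₃,∂₄} into span{∂₁,∂₂} and maps span{∂₁,∂₂} to 0, so J(x)² = 0. -/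
open Matrix

/-- The components `R^l_{ijk}` of the curvature tensor of the Levi-Civita connection:
`R(∂ᵢ,∂ⱼ)∂ₖ = Σ_l R^l_{ijk} ∂_l`. -/
noncomputable def curvature (ψ33 ψ34 ψ44 : (Fin 4 → ℝ) → ℝ) (l i j k : Fin 4)
    (x : Fin 4 → ℝ) : ℝ :=
  pd i (christoffel ψ33 ψ34 ψ44 l j k) x - pd j (christoffel ψ33 ψ34 ψ44 l i k) x +
    ∑ m : Fin 4, (christoffel ψ33 ψ34 ψ44 l i m x * christoffel ψ33 ψ34 ψ44 m j k x -
      christoffel ψ33 ψ34 ψ44 l j m x * christoffel ψ33 ψ34 ψ44 m i k x)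

/-- The Jacobi operator `J(x) : y ↦ R(y,x)x` at the point `p`, in coordinates. -/
noncomputable def jacobiOp (ψ33 ψ34 ψ44 : (Fin 4 → ℝ) → ℝ) (p : Fin 4 → ℝ)
    (x y : Fin 4 → ℝ) : Fin 4 → ℝ :=
  fun l => ∑ i : Fin 4, ∑ j : Fin 4, ∑ k : Fin 4,
    y i * x j * x k * curvature ψ33 ψ34 ψ44 l i j k p


/-- Projection onto coordinates 2, 3. -/
noncomputable def Pproj : (Fin 4 → ℝ) →L[ℝ] (Fin 4 → ℝ) :=
  ContinuousLinearMap.pi fun i => if i = 2 ∨ i = 3 then ContinuousLinearMap.proj i else 0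

lemma Pproj_apply (y : Fin 4 → ℝ) (i : Fin 4) :
    Pproj y i = if i = 2 ∨ i = 3 then y i else 0 := by
  by_cases h : i = 2 ∨ i = 3 <;> simp [Pproj, h]

lemma pd_fderiv_P (ψ : (Fin 4 → ℝ) → ℝ) (hψ : ContDiff ℝ (⊤ : ℕ∞) ψ)
    (hinv : ∀ u v : Fin 4 → ℝ, u 2 = v 2 → u 3 = v 3 → ψ u = ψ v)
    (x v : Fin 4 → ℝ) : fderiv ℝ ψ x v = fderiv ℝ ψ (Pproj x) (Pproj v) := by
  have hψP : ψ = fun w => ψ (Pproj w) :=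
    funext fun w => hinv w (Pproj w) (by simp [Pproj_apply]) (by simp [Pproj_apply])
  conv_lhs => rw [hψP]
  have hcomp : fderiv ℝ (ψ ∘ Pproj) x =
      (fderiv ℝ ψ (Pproj x)).comp (fderiv ℝ (Pproj : (Fin 4 → ℝ) → (Fin 4 → ℝ)) x) :=
    fderiv_comp x (hψ.differentiable (by simp) _) Pproj.differentiableAt
  rw [show (fun w => ψ (Pproj w)) = ψ ∘ Pproj from rfl, hcomp, Pproj.fderiv]
  rfl

lemma pd_psi_01 (ψ : (Fin 4 → ℝ) → ℝ) (hψ : ContDiff ℝ (⊤ : ℕ∞) ψ)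
    (hinv : ∀ u v : Fin 4 → ℝ, u 2 = v 2 → u 3 = v 3 → ψ u = ψ v)
    {i : Fin 4} (hi : i = 0 ∨ i = 1) (x : Fin 4 → ℝ) : pd i ψ x = 0 := by
  unfold pd
  rw [pd_fderiv_P ψ hψ hinv]
  have hP : Pproj (Pi.single i (1:ℝ)) = 0 := by
    funext j
    rw [Pproj_apply]
    by_cases h : j = 2 ∨ j = 3
    · rw [if_pos h]
      rcases hi with hi | hi <;> rcases h with h | h <;> subst hi <;> subst h <;>
        simp [Pi.single_eq_of_ne]
    · rw [if_neg h]; rfl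
  rw [hP, map_zero]

lemma pd_psi_congr (ψ : (Fin 4 → ℝ) → ℝ) (hψ : ContDiff ℝ (⊤ : ℕ∞) ψ)
    (hinv : ∀ u v : Fin 4 → ℝ, u 2 = v 2 → u 3 = v 3 → ψ u = ψ v)
    (a : Fin 4) (y z : Fin 4 → ℝ) (h2 : y 2 = z 2) (h3 : y 3 = z 3) :
    pd a ψ y = pd a ψ z := by
  unfold pd
  rw [pd_fderiv_P ψ hψ hinv, pd_fderiv_P ψ hψ hinv z]
  have hP : Pproj y = Pproj z := by
    funext j
    rw [Pproj_apply, Pproj_apply]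
    by_cases h : j = 2 ∨ j = 3
    · rw [if_pos h, if_pos h]
      rcases h with h | h <;> subst h
      · exact h2
      · exact h3
    · rw [if_neg h, if_neg h]
  rw [hP]

lemma pd_invariant (F : (Fin 4 → ℝ) → ℝ)
    (hF : ∀ u v : Fin 4 → ℝ, u 2 = v 2 → u 3 = v 3 → F u = F v)
    {i : Fin 4} (hi : i = 0 ∨ i = 1) (x : Fin 4 → ℝ) : pd i F x = 0 := by
  unfold pd
  by_cases h : DifferentiableAt ℝ F x
  · set v : Fin 4 → ℝ := Pi.single i 1 with hv
    have hv2 : v 2 = 0 := by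
      rcases hi with hi | hi <;> subst hi <;>
        · rw [hv]; exact Pi.single_eq_of_ne (by decide) 1
    have hv3 : v 3 = 0 := by
      rcases hi with hi | hi <;> subst hi <;>
        · rw [hv]; exact Pi.single_eq_of_ne (by decide) 1
    have hline : ∀ t : ℝ, F (x + t • v) = F x := fun t =>
      hF _ _ (by simp [hv2]) (by simp [hv3])
    have hder : HasDerivAt (fun t : ℝ => x + t • v) v 0 := by
      simpa using ((hasDerivAt_id (0 : ℝ)).smul_const v).const_add x
    have hF0 : HasFDerivAt F (fderiv ℝ F x) (x + (0 : ℝ) • v) := by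
      simpa using h.hasFDerivAt
    have hcomp : HasDerivAt (fun t : ℝ => F (x + t • v)) (fderiv ℝ F x v) 0 :=
      hF0.comp_hasDerivAt 0 hder
    have heq : (fun t : ℝ => F (x + t • v)) = fun _ => F x := funext hline
    rw [heq] at hcomp
    exact hcomp.unique (hasDerivAt_const 0 (F x))
  · rw [fderiv_zero_of_not_differentiableAt h]; rfl

section Walker

variable (ψ33 ψ34 ψ44 : (Fin 4 → ℝ) → ℝ)
variable (hs33 : ContDiff ℝ (⊤ : ℕ∞) ψ33) (hs34 : ContDiff ℝ (⊤ : ℕ∞) ψ34) (hs44 : ContDiff ℝ (⊤ : ℕ∞) ψ44)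
variable (hi33 : ∀ u v : Fin 4 → ℝ, u 2 = v 2 → u 3 = v 3 → ψ33 u = ψ33 v)
variable (hi34 : ∀ u v : Fin 4 → ℝ, u 2 = v 2 → u 3 = v 3 → ψ34 u = ψ34 v)
variable (hi44 : ∀ u v : Fin 4 → ℝ, u 2 = v 2 → u 3 = v 3 → ψ44 u = ψ44 v)

include hs33 hs34 hs44 hi33 hi34 hi44 in
lemma pd_g (x : Fin 4 → ℝ) (i a b : Fin 4)
    (h : i = 0 ∨ i = 1 ∨ a = 0 ∨ a = 1 ∨ b = 0 ∨ b = 1) :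
    pd i (fun y => walkerMetric ψ33 ψ34 ψ44 y a b) x = 0 := by
  have ha : a = 0 ∨ a = 1 ∨ a = 2 ∨ a = 3 := by fin_cases a <;> decide
  have hb : b = 0 ∨ b = 1 ∨ b = 2 ∨ b = 3 := by fin_cases b <;> decide
  rcases ha with rfl | rfl | rfl | rfl <;> rcases hb with rfl | rfl | rfl | rfl
  · rw [show (fun y => walkerMetric ψ33 ψ34 ψ44 y 0 0) = fun _ => (0:ℝ) from
        funext fun y => by simp [walkerMetric]]
    exact pd_const i 0 x
  · rw [show (fun y => walkerMetric ψ33 ψ34 ψ44 y 0 1) = fun _ => (0:ℝ) from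
        funext fun y => by simp [walkerMetric]]
    exact pd_const i 0 x
  · rw [show (fun y => walkerMetric ψ33 ψ34 ψ44 y 0 2) = fun _ => (1:ℝ) from
        funext fun y => by simp [walkerMetric]]
    exact pd_const i 1 x
  · rw [show (fun y => walkerMetric ψ33 ψ34 ψ44 y 0 3) = fun _ => (0:ℝ) from
        funext fun y => by simp [walkerMetric]]
    exact pd_const i 0 x
  · rw [show (fun y => walkerMetric ψ33 ψ34 ψ44 y 1 0) = fun _ => (0:ℝ) from
        funext fun y => by simp [walkerMetric]]
    exact pd_const i 0 x
  · rw [show (fun y => walkerMetric ψ33 ψ34 ψ44 y 1 1) = fun _ => (0:ℝ) from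
        funext fun y => by simp [walkerMetric]]
    exact pd_const i 0 x
  · rw [show (fun y => walkerMetric ψ33 ψ34 ψ44 y 1 2) = fun _ => (0:ℝ) from
        funext fun y => by simp [walkerMetric]]
    exact pd_const i 0 x
  · rw [show (fun y => walkerMetric ψ33 ψ34 ψ44 y 1 3) = fun _ => (1:ℝ) from
        funext fun y => by simp [walkerMetric]]
    exact pd_const i 1 x
  · rw [show (fun y => walkerMetric ψ33 ψ34 ψ44 y 2 0) = fun _ => (1:ℝ) from
        funext fun y => by simp [walkerMetric]]
    exact pd_const i 1 x
  · rw [show (fun y => walkerMetric ψ33 ψ34 ψ44 y 2 1) = fun _ => (0:ℝ) from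
        funext fun y => by simp [walkerMetric]]
    exact pd_const i 0 x
  · rw [show (fun y => walkerMetric ψ33 ψ34 ψ44 y 2 2) = ψ33 from
        funext fun y => by simp [walkerMetric]]
    exact pd_psi_01 ψ33 hs33 hi33 (by simpa using h) x
  · rw [show (fun y => walkerMetric ψ33 ψ34 ψ44 y 2 3) = ψ34 from
        funext fun y => by simp [walkerMetric]]
    exact pd_psi_01 ψ34 hs34 hi34 (by simpa using h) x
  · rw [show (fun y => walkerMetric ψ33 ψ34 ψ44 y 3 0) = fun _ => (0:ℝ) from
        funext fun y => by simp [walkerMetric]]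
    exact pd_const i 0 x
  · rw [show (fun y => walkerMetric ψ33 ψ34 ψ44 y 3 1) = fun _ => (1:ℝ) from
        funext fun y => by simp [walkerMetric]]
    exact pd_const i 1 x
  · rw [show (fun y => walkerMetric ψ33 ψ34 ψ44 y 3 2) = ψ34 from
        funext fun y => by simp [walkerMetric]]
    exact pd_psi_01 ψ34 hs34 hi34 (by simpa using h) x
  · rw [show (fun y => walkerMetric ψ33 ψ34 ψ44 y 3 3) = ψ44 from
        funext fun y => by simp [walkerMetric]]
    exact pd_psi_01 ψ44 hs44 hi44 (by simpa using h) x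

lemma walker_inv (x : Fin 4 → ℝ) :
    (walkerMetric ψ33 ψ34 ψ44 x)⁻¹ =
      Matrix.of ![![-ψ33 x, -ψ34 x, 1, 0], ![-ψ34 x, -ψ44 x, 0, 1],
        ![1, 0, 0, 0], ![0, 1, 0, 0]] := by
  apply Matrix.inv_eq_right_inv
  ext i j
  fin_cases i <;> fin_cases j <;>
    simp [walkerMetric, Matrix.mul_apply, Fin.sum_univ_four, Matrix.one_apply,
      Matrix.vecHead, Matrix.vecTail] <;> ring

include hs33 hs34 hs44 hi33 hi34 hi44 in
lemma christoffel_zero (k i j : Fin 4) (x : Fin 4 → ℝ)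
    (h : k = 2 ∨ k = 3 ∨ i = 0 ∨ i = 1 ∨ j = 0 ∨ j = 1) :
    christoffel ψ33 ψ34 ψ44 k i j x = 0 := by
  have pdg := pd_g ψ33 ψ34 ψ44 hs33 hs34 hs44 hi33 hi34 hi44 x
  have hk : k = 0 ∨ k = 1 ∨ k = 2 ∨ k = 3 := by fin_cases k <;> decide
  unfold christoffel
  rw [walker_inv ψ33 ψ34 ψ44, Fin.sum_univ_four]
  rcases hk with rfl | rfl | rfl | rfl
  · have hij : i = 0 ∨ i = 1 ∨ j = 0 ∨ j = 1 := by simpa using h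
    rcases hij with rfl | rfl | rfl | rfl <;>
      simp [Matrix.vecHead, Matrix.vecTail, pdg]
  · have hij : i = 0 ∨ i = 1 ∨ j = 0 ∨ j = 1 := by simpa using h
    rcases hij with rfl | rfl | rfl | rfl <;>
      simp [Matrix.vecHead, Matrix.vecTail, pdg]
  · simp [Matrix.vecHead, Matrix.vecTail, pdg]
  · simp [Matrix.vecHead, Matrix.vecTail, pdg]

include hs33 hs34 hs44 hi33 hi34 hi44 in
lemma christoffel_congr (k i j : Fin 4) (y z : Fin 4 → ℝ)
    (h2 : y 2 = z 2) (h3 : y 3 = z 3) :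
    christoffel ψ33 ψ34 ψ44 k i j y = christoffel ψ33 ψ34 ψ44 k i j z := by
  have hg : walkerMetric ψ33 ψ34 ψ44 y = walkerMetric ψ33 ψ34 ψ44 z := by
    unfold walkerMetric
    rw [hi33 y z h2 h3, hi34 y z h2 h3, hi44 y z h2 h3]
  have hpd : forall a b c : Fin 4,
      pd a (fun w => walkerMetric ψ33 ψ34 ψ44 w b c) y =
      pd a (fun w => walkerMetric ψ33 ψ34 ψ44 w b c) z := by
    intro a b c
    have hb : b = 0 ∨ b = 1 ∨ b = 2 ∨ b = 3 := by fin_cases b <;> decide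
    have hc : c = 0 ∨ c = 1 ∨ c = 2 ∨ c = 3 := by fin_cases c <;> decide
    rcases hb with rfl | rfl | rfl | rfl <;> rcases hc with rfl | rfl | rfl | rfl
    · rw [show (fun w => walkerMetric ψ33 ψ34 ψ44 w 0 0) = fun _ => (0:ℝ) from
          funext fun w => by simp [walkerMetric], pd_const, pd_const]
    · rw [show (fun w => walkerMetric ψ33 ψ34 ψ44 w 0 1) = fun _ => (0:ℝ) from
          funext fun w => by simp [walkerMetric], pd_const, pd_const]
    · rw [show (fun w => walkerMetric ψ33 ψ34 ψ44 w 0 2) = fun _ => (1:ℝ) from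
          funext fun w => by simp [walkerMetric], pd_const, pd_const]
    · rw [show (fun w => walkerMetric ψ33 ψ34 ψ44 w 0 3) = fun _ => (0:ℝ) from
          funext fun w => by simp [walkerMetric], pd_const, pd_const]
    · rw [show (fun w => walkerMetric ψ33 ψ34 ψ44 w 1 0) = fun _ => (0:ℝ) from
          funext fun w => by simp [walkerMetric], pd_const, pd_const]
    · rw [show (fun w => walkerMetric ψ33 ψ34 ψ44 w 1 1) = fun _ => (0:ℝ) from
          funext fun w => by simp [walkerMetric], pd_const, pd_const]
    · rw [show (fun w => walkerMetric ψ33 ψ34 ψ44 w 1 2) = fun _ => (0:ℝ) from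
          funext fun w => by simp [walkerMetric], pd_const, pd_const]
    · rw [show (fun w => walkerMetric ψ33 ψ34 ψ44 w 1 3) = fun _ => (1:ℝ) from
          funext fun w => by simp [walkerMetric], pd_const, pd_const]
    · rw [show (fun w => walkerMetric ψ33 ψ34 ψ44 w 2 0) = fun _ => (1:ℝ) from
          funext fun w => by simp [walkerMetric], pd_const, pd_const]
    · rw [show (fun w => walkerMetric ψ33 ψ34 ψ44 w 2 1) = fun _ => (0:ℝ) from
          funext fun w => by simp [walkerMetric], pd_const, pd_const]
    · rw [show (fun w => walkerMetric ψ33 ψ34 ψ44 w 2 2) = ψ33 from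
          funext fun w => by simp [walkerMetric]]
      exact pd_psi_congr ψ33 hs33 hi33 a y z h2 h3
    · rw [show (fun w => walkerMetric ψ33 ψ34 ψ44 w 2 3) = ψ34 from
          funext fun w => by simp [walkerMetric]]
      exact pd_psi_congr ψ34 hs34 hi34 a y z h2 h3
    · rw [show (fun w => walkerMetric ψ33 ψ34 ψ44 w 3 0) = fun _ => (0:ℝ) from
          funext fun w => by simp [walkerMetric], pd_const, pd_const]
    · rw [show (fun w => walkerMetric ψ33 ψ34 ψ44 w 3 1) = fun _ => (1:ℝ) from
          funext fun w => by simp [walkerMetric], pd_const, pd_const]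
    · rw [show (fun w => walkerMetric ψ33 ψ34 ψ44 w 3 2) = ψ34 from
          funext fun w => by simp [walkerMetric]]
      exact pd_psi_congr ψ34 hs34 hi34 a y z h2 h3
    · rw [show (fun w => walkerMetric ψ33 ψ34 ψ44 w 3 3) = ψ44 from
          funext fun w => by simp [walkerMetric]]
      exact pd_psi_congr ψ44 hs44 hi44 a y z h2 h3
  unfold christoffel
  rw [hg]
  refine congrArg _ (Finset.sum_congr rfl fun l _ => ?_)
  rw [hpd, hpd, hpd]

include hs33 hs34 hs44 hi33 hi34 hi44 in
lemma curvature_zero (l i j k : Fin 4) (x : Fin 4 → ℝ)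
    (h : l = 2 ∨ l = 3 ∨ i = 0 ∨ i = 1) :
    curvature ψ33 ψ34 ψ44 l i j k x = 0 := by
  have cz := christoffel_zero ψ33 ψ34 ψ44 hs33 hs34 hs44 hi33 hi34 hi44
  unfold curvature
  rcases h with rfl | rfl | hi | hi
  · rw [show christoffel ψ33 ψ34 ψ44 2 j k = fun _ => (0:ℝ) from
        funext fun y => cz 2 j k y (Or.inl rfl),
      show christoffel ψ33 ψ34 ψ44 2 i k = fun _ => (0:ℝ) from
        funext fun y => cz 2 i k y (Or.inl rfl),
      pd_const, pd_const,
      Finset.sum_eq_zero fun m _ => by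
        rw [cz 2 i m x (Or.inl rfl), cz 2 j m x (Or.inl rfl)]; ring]
    ring
  · rw [show christoffel ψ33 ψ34 ψ44 3 j k = fun _ => (0:ℝ) from
        funext fun y => cz 3 j k y (Or.inr (Or.inl rfl)),
      show christoffel ψ33 ψ34 ψ44 3 i k = fun _ => (0:ℝ) from
        funext fun y => cz 3 i k y (Or.inr (Or.inl rfl)),
      pd_const, pd_const,
      Finset.sum_eq_zero fun m _ => by
        rw [cz 3 i m x (Or.inr (Or.inl rfl)), cz 3 j m x (Or.inr (Or.inl rfl))]; ring]
    ring
  · rw [pd_invariant _ (christoffel_congr ψ33 ψ34 ψ44 hs33 hs34 hs44 hi33 hi34 hi44 l j k)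
        (Or.inl hi) x,
      show christoffel ψ33 ψ34 ψ44 l i k = fun _ => (0:ℝ) from
        funext fun y => cz l i k y (by tauto),
      pd_const,
      Finset.sum_eq_zero fun m _ => by
        rw [cz l i m x (by tauto), cz m i k x (by tauto)]; ring]
    ring
  · rw [pd_invariant _ (christoffel_congr ψ33 ψ34 ψ44 hs33 hs34 hs44 hi33 hi34 hi44 l j k)
        (Or.inr hi) x,
      show christoffel ψ33 ψ34 ψ44 l i k = fun _ => (0:ℝ) from
        funext fun y => cz l i k y (by tauto),
      pd_const,
      Finset.sum_eq_zero fun m _ => by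
        rw [cz l i m x (by tauto), cz m i k x (by tauto)]; ring]
    ring

end Walker

/-- For a strict Walker metric of signature (2,2) (the `ψᵢⱼ` depending only on the
coordinates `x₃, x₄`, i.e. indices `2, 3`), every Jacobi operator `J(x)` is nilpotent:
it maps `span{∂₃,∂₄}` into `span{∂₁,∂₂}`, maps `span{∂₁,∂₂}` to `0`, and `J(x)² = 0`. -/
theorem stmt_8 (ψ33 ψ34 ψ44 : (Fin 4 → ℝ) → ℝ)
    (hsmooth : ContDiff ℝ (⊤ : ℕ∞) ψ33 ∧ ContDiff ℝ (⊤ : ℕ∞) ψ34 ∧ ContDiff ℝ (⊤ : ℕ∞) ψ44)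
    (hstrict : ∀ ψ ∈ [ψ33, ψ34, ψ44], ∀ x y : Fin 4 → ℝ,
      x 2 = y 2 → x 3 = y 3 → ψ x = ψ y) :
    ∀ (p x : Fin 4 → ℝ),
      (∀ y : Fin 4 → ℝ, jacobiOp ψ33 ψ34 ψ44 p x y 2 = 0 ∧
        jacobiOp ψ33 ψ34 ψ44 p x y 3 = 0) ∧
      (∀ y : Fin 4 → ℝ, y 2 = 0 → y 3 = 0 → jacobiOp ψ33 ψ34 ψ44 p x y = 0) ∧
      (∀ y : Fin 4 → ℝ, jacobiOp ψ33 ψ34 ψ44 p x (jacobiOp ψ33 ψ34 ψ44 p x y) = 0) := by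
  obtain ⟨hs33, hs34, hs44⟩ := hsmooth
  have hi33 := hstrict ψ33 (by simp)
  have hi34 := hstrict ψ34 (by simp)
  have hi44 := hstrict ψ44 (by simp)
  have cvz := curvature_zero ψ33 ψ34 ψ44 hs33 hs34 hs44 hi33 hi34 hi44
  intro p x
  have part1 : ∀ y : Fin 4 → ℝ, jacobiOp ψ33 ψ34 ψ44 p x y 2 = 0 ∧
      jacobiOp ψ33 ψ34 ψ44 p x y 3 = 0 := by
    intro y
    constructor <;>
    · refine Finset.sum_eq_zero fun i _ => Finset.sum_eq_zero fun j _ =>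
        Finset.sum_eq_zero fun k _ => ?_
      rw [cvz _ i j k p (by tauto)]
      ring
  have part2 : ∀ y : Fin 4 → ℝ, y 2 = 0 → y 3 = 0 →
      jacobiOp ψ33 ψ34 ψ44 p x y = 0 := by
    intro y hy2 hy3
    funext l
    refine Finset.sum_eq_zero fun i _ => ?_
    have hi : i = 0 ∨ i = 1 ∨ i = 2 ∨ i = 3 := by fin_cases i <;> decide
    rcases hi with rfl | rfl | rfl | rfl
    · refine Finset.sum_eq_zero fun j _ => Finset.sum_eq_zero fun k _ => ?_
      rw [cvz l 0 j k p (by tauto)]; ring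
    · refine Finset.sum_eq_zero fun j _ => Finset.sum_eq_zero fun k _ => ?_
      rw [cvz l 1 j k p (by tauto)]; ring
    · refine Finset.sum_eq_zero fun j _ => Finset.sum_eq_zero fun k _ => ?_
      rw [hy2]; ring
    · refine Finset.sum_eq_zero fun j _ => Finset.sum_eq_zero fun k _ => ?_
      rw [hy3]; ring
  exact ⟨part1, part2, fun y => part2 _ (part1 _).1 (part1 _).2⟩
end

section
/- Suppose x₃, x₄ : [0,T) → ℝ satisfy ẍ₃ = 0 and ẍ₄ = ẋ₃ẋ₄x₄² with x₃(t) = t, x₄(0) = 1, ẋ₄(0) = 1, on a maximal interval [0,T). Then T < ∞, x₄(t) ≥ 1 for all t ∈ [0,T), and ẋ₄(t) → ∞ as t → T. Consequently the quantity -½x₄⁴ - 2ẋ₄x₄ tends to -∞ as t → T. -/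
/-!
With `x₃ = t` the equation `ẍ₄ = ẋ₄ x₄²` has the first integral `ẋ₄ - x₄³/3`, so `x₄` solves
`ẋ = (x³ + 2)/3` with `x(0) = 1`. Hence `x₄ ≥ 1` and `x₄` increases, and comparison with
`ẋ = x³/3` shows that `x₄` cannot live beyond `t = 3/2`. On the maximal interval `[0, T)` the
increasing function `x₄` is unbounded: otherwise it has a limit at `T`, and local existence and
uniqueness for the `C¹` field `(x³ + 2)/3` would continue it past `T`. Finally `ẋ₄ ≥ x₄ → ∞`, and
the quantity `-x₄⁴/2 - 2ẋ₄x₄` is at most `-ẋ₄`.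
-/

/-- `x₄` solves `ẍ₄ = ẋ₃ ẋ₄ x₄²` (with `x₃ t = t`) on `[0, T)`, `T : EReal`. -/
def SolvesGeo (x₃ x₄ : ℝ → ℝ) (T : EReal) : Prop :=
  ∀ t : ℝ, 0 ≤ t → (t : EReal) < T →
    DifferentiableAt ℝ x₃ t ∧ DifferentiableAt ℝ (deriv x₃) t ∧
    DifferentiableAt ℝ x₄ t ∧ DifferentiableAt ℝ (deriv x₄) t ∧
    deriv (deriv x₃) t = 0 ∧
    deriv (deriv x₄) t = deriv x₃ t * deriv x₄ t * (x₄ t) ^ 2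

open Set Filter Topology

section Autonomous

variable {E : Type*} [NormedAddCommGroup E] [NormedSpace ℝ E] {g : E → E}

theorem eqOn_Icc_of_hasDerivAt (hg : ContDiff ℝ 1 g) {x z : ℝ → E} {a b : ℝ}
    (hx : ∀ t ∈ Icc a b, HasDerivAt x (g (x t)) t)
    (hz : ∀ t ∈ Icc a b, HasDerivAt z (g (z t)) t) (ha : x a = z a) :
    EqOn x z (Icc a b) := by
  have hxc : ContinuousOn x (Icc a b) := fun t ht => (hx t ht).continuousAt.continuousWithinAt
  have hzc : ContinuousOn z (Icc a b) := fun t ht => (hz t ht).continuousAt.continuousWithinAt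
  obtain ⟨K, hK⟩ := hg.locallyLipschitz.locallyLipschitzOn.exists_lipschitzOnWith_of_compact
    ((isCompact_Icc.image_of_continuousOn hxc).union (isCompact_Icc.image_of_continuousOn hzc))
  exact ODE_solution_unique_of_mem_Icc_right (v := fun _ => g) (fun _ _ => hK)
    hxc (fun t ht => (hx t (Ico_subset_Icc_self ht)).hasDerivWithinAt)
    (fun t ht => Or.inl (mem_image_of_mem _ (Ico_subset_Icc_self ht)))
    hzc (fun t ht => (hz t (Ico_subset_Icc_self ht)).hasDerivWithinAt)
    (fun t ht => Or.inr (mem_image_of_mem _ (Ico_subset_Icc_self ht))) ha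

theorem exists_hasDerivAt_extension [CompleteSpace E] (hg : ContDiff ℝ 1 g) {x : ℝ → E}
    {a τ : ℝ} {L : E} (haτ : a < τ) (hx : ∀ t ∈ Ioo a τ, HasDerivAt x (g (x t)) t)
    (hL : Tendsto x (𝓝[<] τ) (𝓝 L)) :
    ∃ z : ℝ → E, ∃ ε > 0, (∀ t ∈ Ioo (τ - ε) (τ + ε), HasDerivAt z (g (z t)) t) ∧
      EqOn z x (Ioo (τ - ε) τ) := by
  obtain ⟨r, hr, ε, hε, hflow⟩ :=
    (hg.contDiffAt (x := L)).exists_forall_mem_closedBall_exists_eq_forall_mem_Ioo_hasDerivAt 0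
  obtain ⟨s, hsL, hs⟩ := ((hL.eventually (Metric.closedBall_mem_nhds L hr)).and
    (Ioo_mem_nhdsLT (max_lt haτ (by linarith : τ - ε / 2 < τ)))).exists
  rw [max_lt_iff] at hs
  obtain ⟨α, hα₀, hα⟩ := hflow (x s) hsL
  have hz : ∀ t ∈ Ioo (s - ε) (s + ε), HasDerivAt (fun t => α (t - s)) (g (α (t - s))) t :=
    fun t ht => (hα (t - s) ⟨by linarith [ht.1], by linarith [ht.2]⟩).comp_sub_const t s
  refine ⟨fun t => α (t - s), τ - s, by linarith, fun t ht => hz t ⟨?_, ?_⟩, fun t ht => ?_⟩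
  · linarith [ht.1]
  · linarith [ht.2]
  · have hst : s < t := by linarith [ht.1]
    refine eqOn_Icc_of_hasDerivAt hg (a := s) (fun u hu => hz u ⟨?_, ?_⟩)
      (fun u hu => hx u ⟨?_, ?_⟩) (by simp [hα₀]) ⟨hst.le, le_rfl⟩
    all_goals linarith [hu.1, hu.2, ht.2]

end Autonomous

theorem MonotoneOn.tendsto_atTop_nhdsLT_of_not_bddAbove {f : ℝ → ℝ} {a b : ℝ}
    (hf : MonotoneOn f (Ioo a b)) (hbdd : ¬ BddAbove (f '' Ioo a b)) :
    Tendsto f (𝓝[<] b) atTop := by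
  refine tendsto_atTop.2 fun M => ?_
  obtain ⟨_, ⟨s, hs, rfl⟩, hMs⟩ := not_bddAbove_iff.1 hbdd M
  filter_upwards [Ioo_mem_nhdsLT hs.2] with t ht
  exact hMs.le.trans (hf hs ⟨hs.1.trans ht.1, ht.2⟩ ht.1.le)

theorem sub_cube_div_three_eq_of_hasDerivAt {x v : ℝ → ℝ} {a b : ℝ}
    (hx : ∀ t ∈ Icc a b, HasDerivAt x (v t) t)
    (hv : ∀ t ∈ Icc a b, HasDerivAt v (v t * x t ^ 2) t) :
    ∀ t ∈ Icc a b, v t - x t ^ 3 / 3 = v a - x a ^ 3 / 3 := by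
  have hd : ∀ t ∈ Icc a b, HasDerivAt (fun s => v s - x s ^ 3 / 3) 0 t := fun t ht => by
    refine ((hv t ht).fun_sub (((hx t ht).fun_pow 3).div_const 3)).congr_deriv ?_
    push_cast
    ring
  exact constant_of_has_deriv_right_zero (fun t ht => (hd t ht).continuousAt.continuousWithinAt)
    (fun t ht => (hd t (Ico_subset_Icc_self ht)).hasDerivWithinAt)

theorem hasDerivAt_of_solvesGeo {x : ℝ → ℝ} {T : EReal} (hsol : SolvesGeo (fun t => t) x T)
    (h₀ : x 0 = 1) (h₁ : deriv x 0 = 1) {t : ℝ} (ht : 0 ≤ t) (htT : (t : EReal) < T) :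
    HasDerivAt x ((x t ^ 3 + 2) / 3) t := by
  have hderivs : ∀ s ∈ Icc 0 t,
      HasDerivAt x (deriv x s) s ∧ HasDerivAt (deriv x) (deriv x s * x s ^ 2) s := by
    intro s hs
    obtain ⟨-, -, hx, hv, -, hODE⟩ := hsol s hs.1 ((EReal.coe_le_coe_iff.2 hs.2).trans_lt htT)
    refine ⟨hx.hasDerivAt, ?_⟩
    simpa [hODE] using hv.hasDerivAt
  have hconst := sub_cube_div_three_eq_of_hasDerivAt (fun s hs => (hderivs s hs).1)
    (fun s hs => (hderivs s hs).2) t ⟨ht, le_rfl⟩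
  rw [h₀, h₁] at hconst
  convert (hderivs t ⟨ht, le_rfl⟩).1 using 1
  linarith

theorem one_le_of_hasDerivAt {x : ℝ → ℝ} {a b : ℝ}
    (hx : ∀ t ∈ Icc a b, HasDerivAt x ((x t ^ 3 + 2) / 3) t) (ha : 1 ≤ x a) :
    ∀ t ∈ Icc a b, 1 ≤ x t :=
  image_le_of_deriv_right_lt_deriv_boundary' (f' := fun _ => 0) continuousOn_const
    (fun _ _ => hasDerivWithinAt_const _ _ _) ha
    (fun t ht => (hx t ht).continuousAt.continuousWithinAt)
    (fun t ht => (hx t (Ico_subset_Icc_self ht)).hasDerivWithinAt)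
    (fun t _ h => by rw [← h]; norm_num)

/-- Comparison with `ẋ = x³ / 3`: `x⁻² + 2t/3` is antitone, so `2(b - a)/3 < (x a)⁻² ≤ 1`. -/
theorem sub_lt_three_halves_of_hasDerivAt {x : ℝ → ℝ} {a b : ℝ}
    (hx : ∀ t ∈ Icc a b, HasDerivAt x ((x t ^ 3 + 2) / 3) t) (ha : 1 ≤ x a) :
    b - a < 3 / 2 := by
  rcases lt_or_ge b a with hba | hab
  · linarith
  have hge := one_le_of_hasDerivAt hx ha
  have hφ : ∀ t ∈ Icc a b,
      HasDerivAt (fun t => (x t ^ 2)⁻¹ + 2 * t / 3) (-4 / (3 * x t ^ 3)) t := by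
    intro t ht
    have hxt : x t ≠ 0 := by linarith [hge t ht]
    refine ((((hx t ht).fun_pow 2).fun_inv (pow_ne_zero 2 hxt)).fun_add
      (((hasDerivAt_id t).const_mul 2).div_const 3)).congr_deriv ?_
    field_simp
    ring
  have hanti := antitoneOn_of_hasDerivWithinAt_nonpos (convex_Icc a b)
    (fun t ht => (hφ t ht).continuousAt.continuousWithinAt)
    (fun t ht => (hφ t (interior_subset ht)).hasDerivWithinAt)
    (fun t ht => by
      have := hge t (interior_subset ht)
      exact div_nonpos_of_nonpos_of_nonneg (by norm_num) (by positivity))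
    ⟨le_rfl, hab⟩ ⟨hab, le_rfl⟩ hab
  have hb : 0 < (x b ^ 2)⁻¹ := by have := hge b ⟨hab, le_rfl⟩; positivity
  have ha' : (x a ^ 2)⁻¹ ≤ 1 := inv_le_one_of_one_le₀ (one_le_pow₀ ha)
  simp only at hanti
  linarith

/-- `SolvesGeo x₃ x₄ T` is definitionally `∀ t ∈ [0, T), IsGeoAt x₃ x₄ t`. -/
def IsGeoAt (x₃ x₄ : ℝ → ℝ) (t : ℝ) : Prop :=
  DifferentiableAt ℝ x₃ t ∧ DifferentiableAt ℝ (deriv x₃) t ∧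
    DifferentiableAt ℝ x₄ t ∧ DifferentiableAt ℝ (deriv x₄) t ∧
    deriv (deriv x₃) t = 0 ∧
    deriv (deriv x₄) t = deriv x₃ t * deriv x₄ t * (x₄ t) ^ 2

theorem IsGeoAt.congr_of_eventuallyEq {x₃ x₄ y₄ : ℝ → ℝ} {t : ℝ} (h : IsGeoAt x₃ x₄ t)
    (hy : y₄ =ᶠ[𝓝 t] x₄) : IsGeoAt x₃ y₄ t := by
  obtain ⟨h₁, h₂, h₃, h₄, h₅, h₆⟩ := h
  refine ⟨h₁, h₂, hy.differentiableAt_iff.2 h₃, hy.deriv.differentiableAt_iff.2 h₄, h₅, ?_⟩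
  rw [hy.deriv.deriv_eq, hy.deriv_eq, hy.eq_of_nhds, h₆]

theorem isGeoAt_of_eventually_hasDerivAt {z : ℝ → ℝ} {t : ℝ}
    (h : ∀ᶠ s in 𝓝 t, HasDerivAt z ((z s ^ 3 + 2) / 3) s) : IsGeoAt (fun t => t) z t := by
  have hz := h.self_of_nhds
  have hdz : deriv z =ᶠ[𝓝 t] fun s => (z s ^ 3 + 2) / 3 := h.mono fun s hs => hs.deriv
  have hdd := (((hz.fun_pow 3).add_const 2).div_const 3).congr_of_eventuallyEq hdz
  refine ⟨differentiableAt_id, by simp, hz.differentiableAt, hdd.differentiableAt, by simp, ?_⟩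
  rw [hdd.deriv, hz.deriv, deriv_id'', one_mul]
  ring

theorem solvesGeo_piecewise {x z : ℝ → ℝ} {τ ε : ℝ} (hsol : SolvesGeo (fun t => t) x τ)
    (hz : ∀ t ∈ Ioo (τ - ε) (τ + ε), HasDerivAt z ((z t ^ 3 + 2) / 3) t)
    (hzx : EqOn z x (Ioo (τ - ε) τ)) :
    SolvesGeo (fun t => t) (fun t => if t < τ then x t else z t) ((τ + ε : ℝ) : EReal) := by
  intro t ht htT
  rw [EReal.coe_lt_coe_iff] at htT
  rcases lt_or_ge t τ with htτ | hτt
  · refine IsGeoAt.congr_of_eventuallyEq (hsol t ht (EReal.coe_lt_coe_iff.2 htτ)) ?_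
    filter_upwards [eventually_lt_nhds htτ] with s hs using if_pos hs
  · have hmem : Ioo (τ - ε) (τ + ε) ∈ 𝓝 t := Ioo_mem_nhds (by linarith) htT
    refine IsGeoAt.congr_of_eventuallyEq
      (isGeoAt_of_eventually_hasDerivAt (Filter.mem_of_superset hmem hz)) ?_
    filter_upwards [hmem] with s hs
    split_ifs with hsτ
    exacts [(hzx ⟨hs.1, hsτ⟩).symm, rfl]

theorem tendsto_atTop_of_not_extendable {x : ℝ → ℝ} {τ : ℝ} (hτ : 0 < τ)
    (hsol : SolvesGeo (fun t => t) x τ)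
    (hx : ∀ t ∈ Ioo 0 τ, HasDerivAt x ((x t ^ 3 + 2) / 3) t) (hge : ∀ t ∈ Ioo 0 τ, 1 ≤ x t)
    (hmax : ¬ ∃ (T' : EReal) (y : ℝ → ℝ), (τ : EReal) < T' ∧
        (∀ t : ℝ, 0 ≤ t → (t : EReal) < τ → y t = x t) ∧ SolvesGeo (fun t => t) y T') :
    Tendsto x (𝓝[<] τ) atTop := by
  have hmono : MonotoneOn x (Ioo 0 τ) := by
    refine monotoneOn_of_hasDerivWithinAt_nonneg (f' := fun t => (x t ^ 3 + 2) / 3)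
      (convex_Ioo 0 τ)
      (fun t ht => (hx t ht).continuousAt.continuousWithinAt) (fun t ht => ?_) (fun t ht => ?_)
    all_goals rw [interior_Ioo] at ht
    · exact (hx t ht).hasDerivWithinAt
    · have := hge t ht
      positivity
  by_cases hbdd : BddAbove (x '' Ioo 0 τ)
  · obtain ⟨z, ε, hε, hz, hzx⟩ := exists_hasDerivAt_extension (g := fun u => (u ^ 3 + 2) / 3)
      (by fun_prop) hτ hx (hmono.tendsto_nhdsWithin_Ioo_left (nonempty_Ioo.2 hτ) hbdd)
    refine absurd ⟨_, _, ?_, fun t _ ht => if_pos (EReal.coe_lt_coe_iff.1 ht),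
      solvesGeo_piecewise hsol hz hzx⟩ hmax
    exact EReal.coe_lt_coe_iff.2 (lt_add_of_pos_right τ hε)
  · exact hmono.tendsto_atTop_nhdsLT_of_not_bddAbove hbdd

theorem stmt_12 (x₃ x₄ : ℝ → ℝ) (T : EReal) (hT : 0 < T)
    (hx₃ : ∀ t : ℝ, x₃ t = t) (hx₄0 : x₄ 0 = 1) (hx₄'0 : deriv x₄ 0 = 1)
    (hsol : SolvesGeo x₃ x₄ T)
    (hmax : ¬ ∃ (T' : EReal) (y₄ : ℝ → ℝ), T < T' ∧
        (∀ t : ℝ, 0 ≤ t → (t : EReal) < T → y₄ t = x₄ t) ∧ SolvesGeo x₃ y₄ T') :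
    T < ⊤ ∧
    (∀ t : ℝ, 0 ≤ t → (t : EReal) < T → 1 ≤ x₄ t) ∧
    Filter.Tendsto (deriv x₄) (nhdsWithin T.toReal (Set.Iio T.toReal)) Filter.atTop ∧
    Filter.Tendsto (fun t : ℝ => -(1 / 2) * (x₄ t) ^ 4 - 2 * deriv x₄ t * x₄ t)
      (nhdsWithin T.toReal (Set.Iio T.toReal)) Filter.atBot := by
  obtain rfl : x₃ = fun t => t := funext hx₃
  have hderiv : ∀ {t : ℝ}, 0 ≤ t → (t : EReal) < T →
      ∀ s ∈ Icc 0 t, HasDerivAt x₄ ((x₄ s ^ 3 + 2) / 3) s := fun ht htT s hs =>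
    hasDerivAt_of_solvesGeo hsol hx₄0 hx₄'0 hs.1 ((EReal.coe_le_coe_iff.2 hs.2).trans_lt htT)
  have hge : ∀ t : ℝ, 0 ≤ t → (t : EReal) < T → 1 ≤ x₄ t := fun t ht htT =>
    one_le_of_hasDerivAt (hderiv ht htT) hx₄0.ge t ⟨ht, le_rfl⟩
  have hTtop : T < ⊤ := by
    refine lt_top_iff_ne_top.2 fun hTtop => ?_
    have := sub_lt_three_halves_of_hasDerivAt
      (hderiv zero_le_two (hTtop ▸ EReal.coe_lt_top 2)) hx₄0.ge
    norm_num at this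
  lift T to ℝ using ⟨hTtop.ne, (bot_le.trans_lt hT).ne'⟩
  simp only [EReal.toReal_coe, EReal.coe_lt_coe_iff, EReal.coe_pos] at hT hge ⊢
  have hx : Tendsto x₄ (𝓝[<] T) atTop := tendsto_atTop_of_not_extendable hT hsol
    (fun t ht => hderiv ht.1.le (EReal.coe_lt_coe_iff.2 ht.2) t ⟨ht.1.le, le_rfl⟩)
    (fun t ht => hge t ht.1.le ht.2) hmax
  have hbound : ∀ᶠ t in 𝓝[<] T, 1 ≤ x₄ t ∧ x₄ t ≤ deriv x₄ t := by
    filter_upwards [Ioo_mem_nhdsLT hT] with t ht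
    have h1 := hge t ht.1.le ht.2
    rw [(hderiv ht.1.le (EReal.coe_lt_coe_iff.2 ht.2) t ⟨ht.1.le, le_rfl⟩).deriv]
    exact ⟨h1, by nlinarith [mul_nonneg (sq_nonneg (x₄ t - 1)) (by linarith : 0 ≤ x₄ t + 2)]⟩
  have hv : Tendsto (deriv x₄) (𝓝[<] T) atTop :=
    tendsto_atTop_mono' _ (hbound.mono fun _ h => h.2) hx
  refine ⟨EReal.coe_lt_top T, hge, hv, tendsto_atBot_mono' _ ?_ (tendsto_neg_atTop_atBot.comp hv)⟩
  filter_upwards [hbound] with t ⟨h1, h2⟩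
  simp only [Function.comp_apply]
  nlinarith [pow_nonneg (zero_le_one.trans h1) 4]
end
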